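/- Unit cut: if ⊩_B^L 1 and ⊩_B^K χ, then ⊩_B^{L⊎K} χ. -/

import Mathlib

abbrev Atom := ℕ
abbrev ASeq := Multiset Atom × Atom
abbrev Box := Multiset ASeq
abbrev ARule := Multiset Box × Box × Atom
abbrev Base := Set ARule

/-- An atom `d` is persistent in `B` if there is a rule `⟨∅, S, d⟩ ∈ B` with `S` nonempty. -/
def Persistent (B : Base) (d : Atom) : Prop :=
  ∃ S : Box, S ≠ 0 ∧ ((0 : Multiset Box), S, d) ∈ B

/-- Atomic derivability in a base. -/
inductive Deriv (B : Base) : Multiset Atom → Atom → Prop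
  | ref (p : Atom) : Deriv B {p} p
  | app (S : Box) (p : Atom)
      (bc : List (Box × Multiset Atom))
      (dc : List (Atom × Multiset Atom))
      (hrule : ((↑(bc.map Prod.fst) : Multiset Box), S, p) ∈ B)
      (hpers : ∀ x ∈ dc, Persistent B x.1)
      (hbox : ∀ x ∈ bc, ∀ s ∈ x.1, Deriv B (x.2 + s.1) s.2)
      (hd : ∀ x ∈ dc, Deriv B x.2 x.1)
      (hS : ∀ s ∈ S, Deriv B ((↑(dc.map Prod.fst) : Multiset Atom) + s.1) s.2) :
      Deriv B ((bc.map Prod.snd).sum + (dc.map Prod.snd).sum) p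

/-- Formulas of intuitionistic linear logic. -/
inductive Fml : Type
  | atom : Atom → Fml
  | top : Fml
  | zero : Fml
  | one : Fml
  | limp : Fml → Fml → Fml
  | tens : Fml → Fml → Fml
  | wth : Fml → Fml → Fml
  | plus : Fml → Fml → Fml
  | bang : Fml → Fml
deriving DecidableEq

/-- The degree of a formula. -/
def deg : Fml → ℕ
  | .atom _ => 1
  | .top => 2
  | .zero => 2
  | .one => 2
  | .limp φ ψ => deg φ + deg ψ + 1
  | .tens φ ψ => deg φ + deg ψ + 1
  | .wth φ ψ => deg φ + deg ψ + 1
  | .plus φ ψ => deg φ + deg ψ + 1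
  | .bang φ => deg φ + 1

theorem one_le_deg (φ : Fml) : 1 ≤ deg φ := by
  cases φ <;> simp [deg] <;> omega

mutual
  /-- Support `⊩_B^L φ` (empty left-hand side). -/
  def Supp : Base → Multiset Atom → Fml → Prop
    | B, L, .atom p => Deriv B L p
    | _, _, .top => True
    | B, L, .zero => ∀ (K : Multiset Atom) (p : Atom), Supp B (L + K) (.atom p)
    | B, L, .one => ∀ C : Base, B ⊆ C → ∀ (K : Multiset Atom) (p : Atom),
        Supp C K (.atom p) → Supp C (L + K) (.atom p)
    | B, L, .limp φ ψ => SuppInf1 B L φ ψ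
    | B, L, .tens φ ψ => ∀ C : Base, B ⊆ C → ∀ (K : Multiset Atom) (p : Atom),
        SuppInf2 C K φ ψ (.atom p) → Supp C (L + K) (.atom p)
    | B, L, .wth φ ψ => Supp B L φ ∧ Supp B L ψ
    | B, L, .plus φ ψ => ∀ C : Base, B ⊆ C → ∀ (K : Multiset Atom) (p : Atom),
        SuppInf1 C K φ (.atom p) → SuppInf1 C K ψ (.atom p) → Supp C (L + K) (.atom p)
    | B, L, .bang φ => ∀ C : Base, B ⊆ C → ∀ (K : Multiset Atom) (p : Atom),
        (∀ D : Base, C ⊆ D → Supp D 0 φ → Supp D K (.atom p)) → Supp C (L + K) (.atom p)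
  termination_by B L φ => 2 * deg φ
  decreasing_by
    all_goals
      try simp only [deg]
      try have h1 := one_le_deg φ
      try have h2 := one_le_deg ψ
      try have h3 := one_le_deg χ
      try have h4 := one_le_deg α
      try have h5 := one_le_deg β
      omega

  /-- The (Inf) clause for a singleton context `{φ} ⊩_B^L χ`. -/
  def SuppInf1 : Base → Multiset Atom → Fml → Fml → Prop
    | B, L, .bang α, χ => ∀ C : Base, B ⊆ C → Supp C 0 α → Supp C L χ
    | B, L, φ, χ => ∀ C : Base, B ⊆ C → ∀ K : Multiset Atom,
        Supp C K φ → Supp C (L + K) χ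
  termination_by B L φ χ => 2 * (deg φ + deg χ) - 1
  decreasing_by
    all_goals
      try simp only [deg]
      try have h1 := one_le_deg φ
      try have h2 := one_le_deg ψ
      try have h3 := one_le_deg χ
      try have h4 := one_le_deg α
      try have h5 := one_le_deg β
      omega

  /-- The (Inf) clause for a two-element context `{φ, ψ} ⊩_B^L χ`. -/
  def SuppInf2 : Base → Multiset Atom → Fml → Fml → Fml → Prop
    | B, L, .bang α, .bang β, χ => ∀ C : Base, B ⊆ C →
        Supp C 0 α → Supp C 0 β → Supp C L χ
    | B, L, .bang α, ψ, χ => ∀ C : Base, B ⊆ C → ∀ K : Multiset Atom,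
        Supp C 0 α → Supp C K ψ → Supp C (L + K) χ
    | B, L, φ, .bang β, χ => ∀ C : Base, B ⊆ C → ∀ K : Multiset Atom,
        Supp C 0 β → Supp C K φ → Supp C (L + K) χ
    | B, L, φ, ψ, χ => ∀ C : Base, B ⊆ C → ∀ K₁ K₂ : Multiset Atom,
        Supp C K₁ φ → Supp C K₂ ψ → Supp C (L + K₁ + K₂) χ
  termination_by B L φ ψ χ => 2 * (deg φ + deg ψ + deg χ) - 1
  decreasing_by
    all_goals
      try simp only [deg]
      try have h1 := one_le_deg φ
      try have h2 := one_le_deg ψ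
      try have h3 := one_le_deg χ
      try have h4 := one_le_deg α
      try have h5 := one_le_deg β
      omega
end

/-- Is the formula a `!`-formula? -/
def isBang : Fml → Bool
  | .bang _ => true
  | _ => false

/-- Strip a top-level `!`. -/
def unbang : Fml → Fml
  | .bang φ => φ
  | φ => φ

/-- Support for a multiset of formulas: the `(⊎)` clause. -/
def SuppMS (B : Base) (L : Multiset Atom) (Γ : Multiset Fml) : Prop :=
  ∃ l : List (Fml × Multiset Atom), (↑(l.map Prod.fst) : Multiset Fml) = Γ ∧
    (l.map Prod.snd).sum = L ∧ ∀ x ∈ l, Supp B x.2 x.1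

/-- The official (Inf) clause: `Γ ⊩_B^L φ`, where `Γ = !Δ ⊎ Θ`. -/
def SuppSeq (B : Base) (L : Multiset Atom) (Γ : Multiset Fml) (φ : Fml) : Prop :=
  ∀ C : Base, B ⊆ C → ∀ K : Multiset Atom,
    SuppMS C 0 ((Γ.filter (fun ψ => isBang ψ = true)).map unbang) →
    SuppMS C K (Γ.filter (fun ψ => isBang ψ = false)) →
    Supp C (L + K) φ

/-- Validity of a sequent `(Γ : φ)`. -/
def Valid (Γ : Multiset Fml) (φ : Fml) : Prop :=
  ∀ B : Base, SuppSeq B 0 Γ φ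


/-!
Every clause of `Supp` other than those for `⊤`, `&` and `⊸` ends in atomic support
`⊩_C^{K ⊎ K'} p` over an extension `C ⊇ B`, and there the (1) clause for `L` applies directly,
adding `L` to the atomic context. The clauses for `&` and `⊸` go by induction on `χ`, using that
`⊩_B^L 1` persists to every extension of `B`.
-/

namespace Supp

variable {B C : Base} {L K : Multiset Atom}

theorem one_mono (hBC : B ⊆ C) (h : Supp B L .one) : Supp C L .one := by
  rw [Supp] at h ⊢
  exact fun D hCD => h D (hBC.trans hCD)

theorem one_cut_atom (h : Supp B L .one) (hBC : B ⊆ C) {K' : Multiset Atom} {p : Atom}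
    (hp : Supp C (K + K') (.atom p)) : Supp C (L + K + K') (.atom p) := by
  rw [Supp] at h
  rw [add_assoc]
  exact h C hBC _ p hp

end Supp

theorem suppInf1_of_forall_ne_bang {φ : Fml} (hφ : ∀ α, φ ≠ .bang α) (B : Base)
    (L : Multiset Atom) (χ : Fml) :
    SuppInf1 B L φ χ ↔
      ∀ C : Base, B ⊆ C → ∀ K : Multiset Atom, Supp C K φ → Supp C (L + K) χ := by
  cases φ <;> first | exact absurd rfl (hφ _) | (rw [SuppInf1]; exact hφ)

theorem SuppInf1.one_cut {B : Base} {L K : Multiset Atom} {φ ψ : Fml}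
    (h1 : Supp B L .one) (h2 : SuppInf1 B K φ ψ)
    (ih : ∀ C L K, Supp C L .one → Supp C K ψ → Supp C (L + K) ψ) :
    SuppInf1 B (L + K) φ ψ := by
  by_cases hφ : ∃ α, φ = .bang α
  · obtain ⟨α, rfl⟩ := hφ
    rw [SuppInf1] at h2 ⊢
    exact fun C hC hα => ih C L K (h1.one_mono hC) (h2 C hC hα)
  · simp only [not_exists] at hφ
    rw [suppInf1_of_forall_ne_bang hφ] at h2 ⊢
    intro C hC K' hφ'
    rw [add_assoc]
    exact ih C L (K + K') (h1.one_mono hC) (h2 C hC K' hφ')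

theorem unit_cut (B : Base) (L K : Multiset Atom) (χ : Fml)
    (h1 : Supp B L .one) (h2 : Supp B K χ) :
    Supp B (L + K) χ := by
  induction χ generalizing B L K with
  | atom p =>
    rw [Supp] at h1
    exact h1 B subset_rfl K p h2
  | top => rw [Supp]; trivial
  | zero =>
    rw [Supp] at h2 ⊢
    exact fun K' p => h1.one_cut_atom subset_rfl (h2 K' p)
  | one =>
    rw [Supp] at h2 ⊢
    exact fun C hC K' p hp => h1.one_cut_atom hC (h2 C hC K' p hp)
  | limp φ ψ _ ihψ =>
    rw [Supp] at h2 ⊢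
    exact h2.one_cut h1 ihψ
  | tens φ ψ _ _ =>
    rw [Supp] at h2 ⊢
    exact fun C hC K' p hp => h1.one_cut_atom hC (h2 C hC K' p hp)
  | wth φ ψ ihφ ihψ =>
    rw [Supp] at h2 ⊢
    exact ⟨ihφ B L K h1 h2.1, ihψ B L K h1 h2.2⟩
  | plus φ ψ _ _ =>
    rw [Supp] at h2 ⊢
    exact fun C hC K' p hφ hψ => h1.one_cut_atom hC (h2 C hC K' p hφ hψ)
  | bang φ _ =>
    rw [Supp] at h2 ⊢
    exact fun C hC K' p hp => h1.one_cut_atom hC (h2 C hC K' p hp)
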